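/- arXiv:2602.12615 — 2 statements merged into one kernel-verified Lean document; each statement's English description precedes it below -/
import Mathlib

section
/- Let W be uniformly distributed on [0,1] and define the aggregated utility of college c as W·u1(c) + (1-W)·u2(c). With u1(c1)=1.5δ+3ε, u1(c2)=δ+2ε, u1(c3)=0, u2(c1)=0, u2(c2)=0.5δ+2ε, u2(c3)=1.5δ+2ε (δ, ε > 0), the probability that c2 is weakly preferred to both c1 and c3 equals ε(δ+2ε)/((δ+ε)(δ+3ε)), and the probability that c1 is weakly preferred to both c2 and c3 equals (δ+2ε)/(2δ+6ε). -/
open MeasureTheory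

theorem stmt_10 (δ ε : ℝ) (hδ : 0 < δ) (hε : 0 < ε)
    (u1 u2 : Fin 3 → ℝ)
    (hu1 : u1 = ![1.5 * δ + 3 * ε, δ + 2 * ε, 0])
    (hu2 : u2 = ![0, 0.5 * δ + 2 * ε, 1.5 * δ + 2 * ε])
    (agg : ℝ → Fin 3 → ℝ) (hagg : ∀ w c, agg w c = w * u1 c + (1 - w) * u2 c) :
    -- W uniform on [0,1]: probability = Lebesgue measure of the event within [0,1]
    volume {w ∈ Set.Icc (0:ℝ) 1 | agg w 1 ≥ agg w 0 ∧ agg w 1 ≥ agg w 2}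
      = ENNReal.ofReal (ε * (δ + 2 * ε) / ((δ + ε) * (δ + 3 * ε))) ∧
    volume {w ∈ Set.Icc (0:ℝ) 1 | agg w 0 ≥ agg w 1 ∧ agg w 0 ≥ agg w 2}
      = ENNReal.ofReal ((δ + 2 * ε) / (2 * δ + 6 * ε)) := by
  subst hu1 hu2
  have h1 : (0:ℝ) < δ + ε := by linarith
  have h2 : (0:ℝ) < δ + 3 * ε := by linarith
  have h3 : (0:ℝ) < 2 * (δ + ε) := by linarith
  have e0 : ∀ w : ℝ, agg w 0 = w * (1.5 * δ + 3 * ε) := by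
    intro w; rw [hagg]; simp
  have e1 : ∀ w : ℝ, agg w 1 = w * (δ + 2 * ε) + (1 - w) * (0.5 * δ + 2 * ε) := by
    intro w; rw [hagg]; simp
  have e2 : ∀ w : ℝ, agg w 2 = (1 - w) * (1.5 * δ + 2 * ε) := by
    intro w; rw [hagg]; simp
  constructor
  · have hs : {w ∈ Set.Icc (0:ℝ) 1 | agg w 1 ≥ agg w 0 ∧ agg w 1 ≥ agg w 2}
        = Set.Icc (δ / (2 * (δ + ε))) ((0.5 * δ + 2 * ε) / (δ + 3 * ε)) := by
      ext w
      simp only [Set.mem_setOf_eq, Set.mem_Icc, e0, e1, e2, ge_iff_le]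
      constructor
      · rintro ⟨⟨hw0, hw1⟩, hA, hB⟩
        constructor
        · rw [div_le_iff₀ h3]; nlinarith
        · rw [le_div_iff₀ h2]; nlinarith
      · rintro ⟨hA, hB⟩
        rw [div_le_iff₀ h3] at hA
        rw [le_div_iff₀ h2] at hB
        refine ⟨⟨?_, ?_⟩, ?_, ?_⟩ <;> nlinarith
    rw [hs, Real.volume_Icc]
    congr 1
    field_simp
    ring
  · have hs : {w ∈ Set.Icc (0:ℝ) 1 | agg w 0 ≥ agg w 1 ∧ agg w 0 ≥ agg w 2}
        = Set.Icc ((0.5 * δ + 2 * ε) / (δ + 3 * ε)) 1 := by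
      ext w
      simp only [Set.mem_setOf_eq, Set.mem_Icc, e0, e1, e2, ge_iff_le]
      constructor
      · rintro ⟨⟨hw0, hw1⟩, hA, hB⟩
        refine ⟨?_, hw1⟩
        rw [div_le_iff₀ h2]; nlinarith
      · rintro ⟨hA, hB⟩
        rw [div_le_iff₀ h2] at hA
        refine ⟨⟨?_, hB⟩, ?_, ?_⟩ <;> nlinarith
    rw [hs, Real.volume_Icc]
    congr 1
    field_simp
    ring
end

section
/- There exist utility functions u1, u2, u3 : {c1, c2, c3} → [0,1] and a probability distribution over weight vectors (w1, w2, w3) with w_f ≥ 0 and w1+w2+w3 = 1 such that Pr[c1 ≻ c2] > 1/2 and Pr[c2 ≻ c3] > 1/2 but Pr[c1 ≻ c3] < 1/2, where c ≻ c' means ∑_f w_f·u_f(c) > ∑_f w_f·u_f(c'). -/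
/-!
A weight vector concentrated on a single feature `f` ranks the candidates exactly as `u f` does,
so under the uniform distribution on the vertices of the weight simplex each feature acts as one
voter. Three features ranking three candidates cyclically (Condorcet's paradox) then give
`c₀ ≻ c₁` and `c₁ ≻ c₂` with probability `2/3` each, but `c₀ ≻ c₂` only with probability `1/3`.
-/

open MeasureTheory ENNReal Finset

lemma ENNReal.half_lt_natCast_div_iff {k n : ℕ} (hn : n ≠ 0) :
    (1 / 2 : ℝ≥0∞) < k / n ↔ n < 2 * k := by
  rw [← ENNReal.toReal_lt_toReal (by simp) (ENNReal.div_ne_top (by simp) (by simpa))]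
  simp only [ENNReal.toReal_div, ENNReal.toReal_natCast, ENNReal.toReal_one, ENNReal.toReal_ofNat]
  rw [div_lt_div_iff₀ two_pos (by positivity)]
  norm_cast
  omega

lemma ENNReal.natCast_div_lt_half_iff {k n : ℕ} (hn : n ≠ 0) :
    (k / n : ℝ≥0∞) < 1 / 2 ↔ 2 * k < n := by
  rw [← ENNReal.toReal_lt_toReal (ENNReal.div_ne_top (by simp) (by simpa)) (by simp)]
  simp only [ENNReal.toReal_div, ENNReal.toReal_natCast, ENNReal.toReal_one, ENNReal.toReal_ofNat]
  rw [div_lt_div_iff₀ (by positivity) two_pos]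
  norm_cast
  omega

noncomputable def stdSimplexVertexMeasure (ι : Type*) [Fintype ι] [DecidableEq ι] :
    Measure (ι → ℝ) :=
  (Fintype.card ι : ℝ≥0∞)⁻¹ • ∑ f, Measure.dirac (Pi.single f 1)

section stdSimplexVertexMeasure

variable {ι : Type*} [Fintype ι] [DecidableEq ι]

lemma stdSimplexVertexMeasure_apply (s : Set (ι → ℝ))
    [DecidablePred fun f : ι ↦ Pi.single f 1 ∈ s] :
    stdSimplexVertexMeasure ι s = #{f | Pi.single f 1 ∈ s} / Fintype.card ι := by
  simp [stdSimplexVertexMeasure, Measure.dirac_apply, Set.indicator_apply, ENNReal.div_eq_inv_mul]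

lemma stdSimplexVertexMeasure_eq_one [Nonempty ι] {s : Set (ι → ℝ)}
    (hs : ∀ f, Pi.single f 1 ∈ s) : stdSimplexVertexMeasure ι s = 1 := by
  classical
  simp [stdSimplexVertexMeasure_apply, hs, ENNReal.div_self]

instance [Nonempty ι] : IsProbabilityMeasure (stdSimplexVertexMeasure ι) :=
  ⟨stdSimplexVertexMeasure_eq_one fun _ ↦ Set.mem_univ _⟩

lemma stdSimplexVertexMeasure_stdSimplex [Nonempty ι] :
    stdSimplexVertexMeasure ι (stdSimplex ℝ ι) = 1 :=
  stdSimplexVertexMeasure_eq_one (single_mem_stdSimplex ℝ)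

lemma stdSimplexVertexMeasure_weightedSum_lt (x y : ι → ℝ) :
    stdSimplexVertexMeasure ι {w | ∑ f, w f * x f < ∑ f, w f * y f} =
      #{f | x f < y f} / Fintype.card ι := by
  classical
  simp [stdSimplexVertexMeasure_apply, Pi.single_apply]

lemma half_lt_stdSimplexVertexMeasure_weightedSum_lt_iff [Nonempty ι] (x y : ι → ℝ) :
    1 / 2 < stdSimplexVertexMeasure ι {w | ∑ f, w f * x f < ∑ f, w f * y f} ↔
      Fintype.card ι < 2 * #{f | x f < y f} := by
  rw [stdSimplexVertexMeasure_weightedSum_lt, ENNReal.half_lt_natCast_div_iff Fintype.card_ne_zero]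

lemma stdSimplexVertexMeasure_weightedSum_lt_lt_half_iff [Nonempty ι] (x y : ι → ℝ) :
    stdSimplexVertexMeasure ι {w | ∑ f, w f * x f < ∑ f, w f * y f} < 1 / 2 ↔
      2 * #{f | x f < y f} < Fintype.card ι := by
  rw [stdSimplexVertexMeasure_weightedSum_lt, ENNReal.natCast_div_lt_half_iff Fintype.card_ne_zero]

end stdSimplexVertexMeasure

/-- Feature `f` ranks the candidates `f, f + 1, f + 2` in this order. -/
noncomputable def condorcetProfile : Fin 3 → Fin 3 → ℝ :=
  ![![1, 1/2, 0], ![0, 1, 1/2], ![1/2, 0, 1]]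

lemma condorcetProfile_mem_Icc (f c : Fin 3) : condorcetProfile f c ∈ Set.Icc (0 : ℝ) 1 := by
  fin_cases f <;> fin_cases c <;> norm_num [condorcetProfile]

lemma card_condorcetProfile_lt :
    #{f | condorcetProfile f 1 < condorcetProfile f 0} = 2 ∧
      #{f | condorcetProfile f 2 < condorcetProfile f 1} = 2 ∧
      #{f | condorcetProfile f 2 < condorcetProfile f 0} = 1 := by
  simp only [Finset.card_filter, Fin.sum_univ_three]
  norm_num [condorcetProfile, Matrix.cons_val_two, Matrix.tail_cons]

theorem stmt_17 :
    ∃ (u : Fin 3 → Fin 3 → ℝ), (∀ f c, u f c ∈ Set.Icc (0:ℝ) 1) ∧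
    ∃ (μ : Measure (Fin 3 → ℝ)), IsProbabilityMeasure μ ∧
      μ {w | (∀ f, 0 ≤ w f) ∧ ∑ f, w f = 1} = 1 ∧
      μ {w | ∑ f, w f * u f 0 > ∑ f, w f * u f 1} > 1/2 ∧
      μ {w | ∑ f, w f * u f 1 > ∑ f, w f * u f 2} > 1/2 ∧
      μ {w | ∑ f, w f * u f 0 > ∑ f, w f * u f 2} < 1/2 := by
  obtain ⟨h10, h21, h20⟩ := card_condorcetProfile_lt
  refine ⟨condorcetProfile, condorcetProfile_mem_Icc, stdSimplexVertexMeasure (Fin 3), inferInstance,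
    stdSimplexVertexMeasure_stdSimplex, ?_, ?_, ?_⟩
  · exact (half_lt_stdSimplexVertexMeasure_weightedSum_lt_iff _ _).2 (by simp [h10])
  · exact (half_lt_stdSimplexVertexMeasure_weightedSum_lt_iff _ _).2 (by simp [h21])
  · exact (stdSimplexVertexMeasure_weightedSum_lt_lt_half_iff _ _).2 (by simp [h20])
end
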